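/- Rényi divergence from a strongly log-concave Gibbs measure to a centered isotropic Gaussian (combined bound in the proof of Lemma 7.1, obtained via the weak triangle inequality). Let 𝓛 : ℝ^p → ℝ be differentiable, m-strongly convex, and M-smooth with m ≤ M, whose global minimizer θ_opt satisfies ‖θ_opt‖ ≤ R, and let β > 0. Let P be the probability measure on ℝ^p with density exp(−β𝓛(θ))/Z where Z = ∫_{ℝ^p} exp(−β𝓛(θ)) dθ, and let Θ₀ be the probability measure with density (βm/(2π))^{p/2} exp(−(βm/2)‖θ‖²) (the Gaussian N(0, (βm)^{-1} I_p)). Then for every α ≥ 2, R_α(P, Θ₀) ≤ (3p/2)·log(M/m) + βm(2α − 1)R²/2. -/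

import Mathlib

/-! Strong convexity and smoothness sandwich `β𝓛` between the quadratics
`β𝓛 θopt + (β m / 2)‖θ - θopt‖²` and `β𝓛 θopt + (β M / 2)‖θ - θopt‖²`. The upper one bounds the
normalising constant from below, so the Gibbs density is at most `(M / m)^(p/2)` times the density
of `N(θopt, (β m)⁻¹ I)`. Comparing densities pointwise inside the Rényi integral costs
`α / (α - 1) · (p / 2) log (M / m)`, and the Rényi divergence between two Gaussians with the same
covariance `(β m)⁻¹ I` is `α β m ‖θopt‖² / 2` in closed form; for `α ≥ 2` these are at most
the two terms of the bound. -/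

open MeasureTheory Real

noncomputable section

/-- ℝ^p as a Euclidean space. -/
abbrev Eu (p : ℕ) := EuclideanSpace ℝ (Fin p)

/-- Rényi divergence of order `α` between two probability densities `pd, qd`
with respect to Lebesgue measure on ℝ^p:
`R_α(P, Q) = (α − 1)⁻¹ log ∫ pd(θ)^α qd(θ)^(1−α) dθ`. -/
def renyiDiv {p : ℕ} (α : ℝ) (pd qd : Eu p → ℝ) : ℝ :=
  (α - 1)⁻¹ * Real.log (∫ θ, pd θ ^ α * qd θ ^ (1 - α))

/-- The density of the Gaussian `N(μ, (βm)⁻¹ I_p)` on ℝ^p. -/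
def gaussDensity (p : ℕ) (βm : ℝ) (μ : Eu p) (θ : Eu p) : ℝ :=
  (βm / (2 * Real.pi)) ^ ((p : ℝ) / 2) * Real.exp (-(βm / 2) * ‖θ - μ‖ ^ 2)

section StrongConvexity

open Filter Topology

variable {E : Type*} [NormedAddCommGroup E] [NormedSpace ℝ E]

lemma StrongConvexOn.add_half_mul_norm_sub_sq_le_of_isMinOn {s : Set E} {m : ℝ} {f : E → ℝ}
    (hf : StrongConvexOn s m f) {x₀ : E} (hmin : IsMinOn f s x₀) (hx₀ : x₀ ∈ s) {x : E}
    (hx : x ∈ s) : f x₀ + m / 2 * ‖x - x₀‖ ^ 2 ≤ f x := by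
  have hsegment : ∀ a ∈ Set.Ioo (0 : ℝ) 1, f x₀ + a * (m / 2 * ‖x - x₀‖ ^ 2) ≤ f x := by
    rintro a ⟨ha₀, ha₁⟩
    have hb : 0 < 1 - a := sub_pos.2 ha₁
    have hconv := hf.2 hx₀ hx ha₀.le hb.le (add_sub_cancel a 1)
    have hle : f x₀ ≤ f (a • x₀ + (1 - a) • x) :=
      hmin (hf.1 hx₀ hx ha₀.le hb.le (add_sub_cancel a 1))
    simp only [smul_eq_mul, norm_sub_rev x₀ x] at hconv
    refine le_of_mul_le_mul_left ?_ hb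
    nlinarith
  have hlim : Tendsto (fun a : ℝ => f x₀ + a * (m / 2 * ‖x - x₀‖ ^ 2))
      (𝓝[<] 1) (𝓝 (f x₀ + m / 2 * ‖x - x₀‖ ^ 2)) := by
    simpa using (tendsto_const_nhds.add ((tendsto_id (x := 𝓝 (1 : ℝ))).mul_const _)).mono_left
      nhdsWithin_le_nhds
  exact le_of_tendsto hlim (eventually_of_mem (Ioo_mem_nhdsLT zero_lt_one) hsegment)

end StrongConvexity

section Gradient

open InnerProductSpace

variable {E : Type*} [NormedAddCommGroup E] [InnerProductSpace ℝ E] [CompleteSpace E]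

lemma IsLocalMin.hasGradientAt_eq_zero {f : E → ℝ} {a g : E} (h : IsLocalMin f a)
    (hf : HasGradientAt f g a) : g = 0 := by
  simpa using congrArg (toDual ℝ E).symm (h.hasFDerivAt_eq_zero hf.hasFDerivAt)

lemma le_add_inner_add_half_mul_norm_sub_sq_of_lipschitzWith {f : E → ℝ} {g : E → E}
    {M : NNReal} (hf : ∀ x, HasGradientAt f (g x) x) (hg : LipschitzWith M g) (x y : E) :
    f y ≤ f x + inner ℝ (g x) (y - x) + M / 2 * ‖y - x‖ ^ 2 := by
  set v := y - x
  let φ : ℝ → ℝ := fun t => f (x + t • v) - t * inner ℝ (g x) v - M / 2 * t ^ 2 * ‖v‖ ^ 2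
  have hφ : ∀ t, HasDerivAt φ (inner ℝ (g (x + t • v) - g x) v - M * t * ‖v‖ ^ 2) t := by
    intro t
    have hline : HasDerivAt (fun t : ℝ => x + t • v) v t := by
      simpa using ((hasDerivAt_id t).smul_const v).const_add x
    have hcomp := (hf (x + t • v)).hasFDerivAt.comp_hasDerivAt t hline
    simp only [Function.comp_def, toDual_apply_apply] at hcomp
    refine ((hcomp.sub ((hasDerivAt_id t).mul_const (inner ℝ (g x) v))).sub
      (((hasDerivAt_pow 2 t).const_mul (M / 2 : ℝ)).mul_const (‖v‖ ^ 2))).congr_deriv ?_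
    rw [inner_sub_left]
    ring
  have hanti : AntitoneOn φ (Set.Icc 0 1) := by
    refine antitoneOn_of_hasDerivWithinAt_nonpos (convex_Icc 0 1)
      (fun t _ => (hφ t).continuousAt.continuousWithinAt) (fun t _ => (hφ t).hasDerivWithinAt) ?_
    intro t ht
    rw [interior_Icc] at ht
    have hlip : ‖g (x + t • v) - g x‖ ≤ M * (t * ‖v‖) := by
      simpa [norm_smul, abs_of_pos ht.1] using hg.norm_sub_le (x + t • v) x
    nlinarith [real_inner_le_norm (g (x + t • v) - g x) v, norm_nonneg v]
  have h01 := hanti (Set.left_mem_Icc.2 zero_le_one) (Set.right_mem_Icc.2 zero_le_one) zero_le_one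
  simp only [φ, one_smul, zero_smul, add_zero, v, add_sub_cancel] at h01
  linarith

end Gradient

lemma mul_norm_sub_sq_add_one_sub_mul_norm_sub_sq {E : Type*} [NormedAddCommGroup E]
    [InnerProductSpace ℝ E] (α : ℝ) (x y z : E) :
    α * ‖x - y‖ ^ 2 + (1 - α) * ‖x - z‖ ^ 2 =
      ‖x - (α • y + (1 - α) • z)‖ ^ 2 + α * (1 - α) * ‖y - z‖ ^ 2 := by
  have hxy : x - y = (x - z) - (y - z) := by abel
  have hmix : x - (α • y + (1 - α) • z) = (x - z) - α • (y - z) := by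
    rw [smul_sub, sub_smul, one_smul]; abel
  rw [hxy, hmix]
  generalize x - z = u
  generalize y - z = w
  rw [norm_sub_sq_real, norm_sub_sq_real, inner_smul_right, norm_smul, Real.norm_eq_abs, mul_pow,
    sq_abs]
  ring

section Gaussian

variable {p : ℕ} {b : ℝ}

lemma gaussDensity_pos (hb : 0 < b) (μ θ : Eu p) : 0 < gaussDensity p b μ θ := by
  unfold gaussDensity; positivity

lemma continuous_gaussDensity (μ : Eu p) : Continuous (gaussDensity p b μ) := by
  unfold gaussDensity; fun_prop

lemma integral_exp_neg_mul_norm_sub_sq (hb : 0 < b) (μ : Eu p) :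
    ∫ θ : Eu p, Real.exp (-b * ‖θ - μ‖ ^ 2) = (π / b) ^ ((p : ℝ) / 2) := by
  rw [integral_sub_right_eq_self (fun θ : Eu p => Real.exp (-b * ‖θ‖ ^ 2)) μ,
    GaussianFourier.integral_rexp_neg_mul_sq_norm hb, finrank_euclideanSpace_fin]

lemma integrable_exp_neg_mul_norm_sub_sq (hb : 0 < b) (μ : Eu p) :
    Integrable fun θ : Eu p => Real.exp (-b * ‖θ - μ‖ ^ 2) :=
  Integrable.of_integral_ne_zero <| by
    rw [integral_exp_neg_mul_norm_sub_sq hb]; positivity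

lemma integral_gaussDensity (hb : 0 < b) (μ : Eu p) : ∫ θ, gaussDensity p b μ θ = 1 := by
  simp only [gaussDensity]
  rw [integral_const_mul, integral_exp_neg_mul_norm_sub_sq (half_pos hb), ← Real.mul_rpow,
    show b / (2 * π) * (π / (b / 2)) = 1 by field_simp, Real.one_rpow] <;> positivity

lemma integrable_gaussDensity (hb : 0 < b) (μ : Eu p) : Integrable (gaussDensity p b μ) :=
  Integrable.of_integral_ne_zero <| by simp [integral_gaussDensity hb]

lemma gaussDensity_rpow_mul_rpow (hb : 0 ≤ b) (α : ℝ) (μ ν θ : Eu p) :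
    gaussDensity p b μ θ ^ α * gaussDensity p b ν θ ^ (1 - α) =
      Real.exp (b / 2 * α * (α - 1) * ‖μ - ν‖ ^ 2) *
        gaussDensity p b (α • μ + (1 - α) • ν) θ := by
  have hc : 0 ≤ (b / (2 * π)) ^ ((p : ℝ) / 2) := by positivity
  have hexponent := mul_norm_sub_sq_add_one_sub_mul_norm_sub_sq α θ μ ν
  simp only [gaussDensity]
  rw [Real.mul_rpow hc (Real.exp_nonneg _), Real.mul_rpow hc (Real.exp_nonneg _),
    ← Real.exp_mul, ← Real.exp_mul, mul_mul_mul_comm, ← Real.rpow_add' hc (by norm_num),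
    add_sub_cancel, Real.rpow_one, ← Real.exp_add, mul_left_comm, ← Real.exp_add]
  congr 2
  linear_combination (-b / 2) * hexponent

lemma integrable_gaussDensity_rpow_mul_rpow (hb : 0 < b) (α : ℝ) (μ ν : Eu p) :
    Integrable fun θ => gaussDensity p b μ θ ^ α * gaussDensity p b ν θ ^ (1 - α) := by
  simp_rw [gaussDensity_rpow_mul_rpow hb.le]
  exact (integrable_gaussDensity hb _).const_mul _

lemma renyiDiv_gaussDensity (hb : 0 < b) {α : ℝ} (hα : α ≠ 1) (μ ν : Eu p) :
    renyiDiv α (gaussDensity p b μ) (gaussDensity p b ν) = α * b / 2 * ‖μ - ν‖ ^ 2 := by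
  simp only [renyiDiv, gaussDensity_rpow_mul_rpow hb.le, integral_const_mul,
    integral_gaussDensity hb, mul_one, Real.log_exp]
  field_simp [sub_ne_zero.2 hα]

end Gaussian

section Renyi

variable {p : ℕ} {α K : ℝ} {pd pd' qd : Eu p → ℝ}

lemma renyiDiv_le_of_le_mul (hα : 1 < α) (hK : 0 < K) (hpd : ∀ θ, 0 < pd θ)
    (hqd : ∀ θ, 0 < qd θ) (hpd_meas : Measurable pd) (hqd_meas : Measurable qd)
    (hle : ∀ θ, pd θ ≤ K * pd' θ) (hint : Integrable fun θ => pd' θ ^ α * qd θ ^ (1 - α)) :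
    renyiDiv α pd qd ≤ α / (α - 1) * Real.log K + renyiDiv α pd' qd := by
  have hpd' : ∀ θ, 0 < pd' θ := fun θ => pos_of_mul_pos_right ((hpd θ).trans_le (hle θ)) hK.le
  have hpoint : ∀ θ, pd θ ^ α * qd θ ^ (1 - α) ≤ K ^ α * (pd' θ ^ α * qd θ ^ (1 - α)) := by
    intro θ
    rw [← mul_assoc, ← Real.mul_rpow hK.le (hpd' θ).le]
    have := hpd θ
    have := hqd θ
    gcongr
    exact hle θ
  have hint_pd : Integrable fun θ => pd θ ^ α * qd θ ^ (1 - α) :=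
    (hint.const_mul (K ^ α)).mono'
      ((hpd_meas.pow_const α).mul (hqd_meas.pow_const _)).aestronglyMeasurable
      (Filter.Eventually.of_forall fun θ => by
        have := hpd θ
        have := hqd θ
        rw [Real.norm_of_nonneg (by positivity)]
        exact hpoint θ)
  have hpos : 0 < ∫ θ, pd θ ^ α * qd θ ^ (1 - α) := by
    have hprod : ∀ θ, 0 < pd θ ^ α * qd θ ^ (1 - α) := fun θ =>
      mul_pos (Real.rpow_pos_of_pos (hpd θ) _) (Real.rpow_pos_of_pos (hqd θ) _)
    rw [integral_pos_iff_support_of_nonneg (fun θ => (hprod θ).le) hint_pd,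
      Function.support_eq_univ fun θ => (hprod θ).ne']
    exact Measure.measure_univ_pos.2 (NeZero.ne _)
  have hmono := integral_mono hint_pd (hint.const_mul _) hpoint
  rw [integral_const_mul] at hmono
  have hpos' : 0 < ∫ θ, pd' θ ^ α * qd θ ^ (1 - α) :=
    pos_of_mul_pos_right (hpos.trans_le hmono) (by positivity)
  have hlog := Real.log_le_log hpos hmono
  rw [Real.log_mul (by positivity) hpos'.ne', Real.log_rpow hK] at hlog
  unfold renyiDiv
  calc (α - 1)⁻¹ * Real.log (∫ θ, pd θ ^ α * qd θ ^ (1 - α))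
      ≤ (α - 1)⁻¹ * (α * Real.log K + Real.log (∫ θ, pd' θ ^ α * qd θ ^ (1 - α))) := by
        gcongr
    _ = _ := by ring

end Renyi

section Gibbs

variable {p : ℕ}

def gibbsDensity (V : Eu p → ℝ) (θ : Eu p) : ℝ :=
  Real.exp (-V θ) / ∫ x, Real.exp (-V x)

variable {V : Eu p → ℝ} {a b α : ℝ} {x₀ : Eu p}

lemma integrable_exp_neg_of_add_half_mul_norm_sub_sq_le (hV : Measurable V) (ha : 0 < a)
    (hlower : ∀ x, V x₀ + a / 2 * ‖x - x₀‖ ^ 2 ≤ V x) :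
    Integrable fun x => Real.exp (-V x) := by
  refine ((integrable_exp_neg_mul_norm_sub_sq (half_pos ha) x₀).const_mul
    (Real.exp (-V x₀))).mono' hV.neg.exp.aestronglyMeasurable
    (Filter.Eventually.of_forall fun x => ?_)
  rw [Real.norm_of_nonneg (Real.exp_nonneg _), ← Real.exp_add]
  exact Real.exp_le_exp.2 (by linarith [hlower x])

lemma gibbsDensity_pos (hint : Integrable fun x => Real.exp (-V x)) (θ : Eu p) :
    0 < gibbsDensity V θ :=
  div_pos (Real.exp_pos _) (integral_exp_pos hint)

lemma measurable_gibbsDensity (hV : Measurable V) : Measurable (gibbsDensity V) :=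
  hV.neg.exp.div_const _

lemma gibbsDensity_le_mul_gaussDensity (hV : Measurable V) (ha : 0 < a) (hb : 0 < b)
    (hlower : ∀ x, V x₀ + a / 2 * ‖x - x₀‖ ^ 2 ≤ V x)
    (hupper : ∀ x, V x ≤ V x₀ + b / 2 * ‖x - x₀‖ ^ 2) (θ : Eu p) :
    gibbsDensity V θ ≤ (b / a) ^ ((p : ℝ) / 2) * gaussDensity p a x₀ θ := by
  have hint := integrable_exp_neg_of_add_half_mul_norm_sub_sq_le hV ha hlower
  have hZ : Real.exp (-V x₀) * (2 * π / b) ^ ((p : ℝ) / 2) ≤ ∫ x, Real.exp (-V x) := by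
    calc Real.exp (-V x₀) * (2 * π / b) ^ ((p : ℝ) / 2)
        = ∫ x, Real.exp (-V x₀) * Real.exp (-(b / 2) * ‖x - x₀‖ ^ 2) := by
          rw [integral_const_mul, integral_exp_neg_mul_norm_sub_sq (half_pos hb)]
          field_simp
      _ ≤ ∫ x, Real.exp (-V x) := by
          refine integral_mono ((integrable_exp_neg_mul_norm_sub_sq (half_pos hb) x₀).const_mul _)
            hint fun x => ?_
          rw [← Real.exp_add]
          exact Real.exp_le_exp.2 (by linarith [hupper x])
  have hconst : (b / a) ^ ((p : ℝ) / 2) * (a / (2 * π)) ^ ((p : ℝ) / 2) *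
      (2 * π / b) ^ ((p : ℝ) / 2) = 1 := by
    rw [← Real.mul_rpow (by positivity) (by positivity),
      ← Real.mul_rpow (by positivity) (by positivity),
      show b / a * (a / (2 * π)) * (2 * π / b) = 1 by field_simp, Real.one_rpow]
  rw [gibbsDensity, div_le_iff₀ (integral_exp_pos hint)]
  calc Real.exp (-V θ) ≤ Real.exp (-V x₀) * Real.exp (-(a / 2) * ‖θ - x₀‖ ^ 2) := by
        rw [← Real.exp_add]
        exact Real.exp_le_exp.2 (by linarith [hlower θ])
    _ = (b / a) ^ ((p : ℝ) / 2) * gaussDensity p a x₀ θ *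
        (Real.exp (-V x₀) * (2 * π / b) ^ ((p : ℝ) / 2)) := by
        rw [gaussDensity]
        linear_combination (-(Real.exp (-V x₀) * Real.exp (-(a / 2) * ‖θ - x₀‖ ^ 2))) * hconst
    _ ≤ (b / a) ^ ((p : ℝ) / 2) * gaussDensity p a x₀ θ * ∫ x, Real.exp (-V x) := by
        have := gaussDensity_pos ha x₀ θ
        gcongr

lemma renyiDiv_gibbsDensity_gaussDensity_le (hV : Measurable V) (ha : 0 < a) (hb : 0 < b)
    (hlower : ∀ x, V x₀ + a / 2 * ‖x - x₀‖ ^ 2 ≤ V x)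
    (hupper : ∀ x, V x ≤ V x₀ + b / 2 * ‖x - x₀‖ ^ 2) (hα : 1 < α) (ν : Eu p) :
    renyiDiv α (gibbsDensity V) (gaussDensity p a ν) ≤
      α / (α - 1) * (p / 2 * Real.log (b / a)) + α * a / 2 * ‖x₀ - ν‖ ^ 2 := by
  calc renyiDiv α (gibbsDensity V) (gaussDensity p a ν)
      ≤ α / (α - 1) * Real.log ((b / a) ^ ((p : ℝ) / 2)) +
          renyiDiv α (gaussDensity p a x₀) (gaussDensity p a ν) :=
        renyiDiv_le_of_le_mul hα (by positivity)
          (gibbsDensity_pos (integrable_exp_neg_of_add_half_mul_norm_sub_sq_le hV ha hlower))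
          (gaussDensity_pos ha ν) (measurable_gibbsDensity hV)
          (continuous_gaussDensity ν).measurable
          (gibbsDensity_le_mul_gaussDensity hV ha hb hlower hupper)
          (integrable_gaussDensity_rpow_mul_rpow ha α x₀ ν)
    _ = α / (α - 1) * (p / 2 * Real.log (b / a)) + α * a / 2 * ‖x₀ - ν‖ ^ 2 := by
        rw [Real.log_rpow (by positivity), renyiDiv_gaussDensity ha hα.ne']

end Gibbs

theorem renyi_gibbs_to_centered_gaussian_general
    {p : ℕ}
    (𝓛 : Eu p → ℝ) (g : Eu p → Eu p) (hgrad : ∀ x, HasGradientAt 𝓛 (g x) x)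
    (m M : ℝ) (hm : 0 < m) (hmM : m ≤ M)
    -- `m`-strong convexity: `𝓛 - (m/2)‖·‖²` is convex
    (hsc : ConvexOn ℝ Set.univ (fun x => 𝓛 x - m / 2 * ‖x‖ ^ 2))
    -- `M`-smoothness: the gradient is `M`-Lipschitz
    (hsm : LipschitzWith M.toNNReal g)
    (θopt : Eu p) (hopt : ∀ x, 𝓛 θopt ≤ 𝓛 x)
    (R : ℝ) (hR : ‖θopt‖ ≤ R)
    (β : ℝ) (hβ : 0 < β)
    (α : ℝ) (hα : 2 ≤ α) :
    renyiDiv α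
        (fun θ => Real.exp (-β * 𝓛 θ) / (∫ x, Real.exp (-β * 𝓛 x)))
        (gaussDensity p (β * m) 0) ≤
      (3 * p / 2) * Real.log (M / m) + β * m * (2 * α - 1) * R ^ 2 / 2 := by
  have hM : 0 < M := hm.trans_le hmM
  have hmin : IsMinOn 𝓛 Set.univ θopt := fun x _ => hopt x
  have hg0 : g θopt = 0 := (hmin.isLocalMin Filter.univ_mem).hasGradientAt_eq_zero (hgrad θopt)
  set V : Eu p → ℝ := fun x => β * 𝓛 x
  have hV : Measurable V :=
    (continuous_const.mul
      (continuous_iff_continuousAt.2 fun x => (hgrad x).continuousAt)).measurable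
  have hlower : ∀ x, V θopt + β * m / 2 * ‖x - θopt‖ ^ 2 ≤ V x := fun x => by
    nlinarith [(strongConvexOn_iff_convex.2 hsc).add_half_mul_norm_sub_sq_le_of_isMinOn hmin
      (Set.mem_univ θopt) (Set.mem_univ x)]
  have hupper : ∀ x, V x ≤ V θopt + β * M / 2 * ‖x - θopt‖ ^ 2 := fun x => by
    have := le_add_inner_add_half_mul_norm_sub_sq_of_lipschitzWith hgrad hsm θopt x
    rw [hg0, inner_zero_left, add_zero, Real.coe_toNNReal M hM.le] at this
    nlinarith
  have hgibbs : (fun θ => Real.exp (-β * 𝓛 θ) / ∫ x, Real.exp (-β * 𝓛 x)) = gibbsDensity V := by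
    simp only [V, neg_mul]; rfl
  rw [hgibbs]
  calc renyiDiv α (gibbsDensity V) (gaussDensity p (β * m) 0)
      ≤ α / (α - 1) * (p / 2 * Real.log (β * M / (β * m))) + α * (β * m) / 2 * ‖θopt - 0‖ ^ 2 :=
        renyiDiv_gibbsDensity_gaussDensity_le hV (by positivity) (by positivity) hlower hupper
          (by linarith) 0
    _ = α / (α - 1) * (p / 2 * Real.log (M / m)) + α * (β * m) / 2 * ‖θopt‖ ^ 2 := by
        rw [mul_div_mul_left M m hβ.ne', sub_zero]
    _ ≤ 3 * p / 2 * Real.log (M / m) + β * m * (2 * α - 1) * R ^ 2 / 2 := by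
        have hlog : 0 ≤ Real.log (M / m) := Real.log_nonneg ((one_le_div hm).2 hmM)
        have hratio : α / (α - 1) ≤ 3 := by rw [div_le_iff₀ (by linarith)]; linarith
        have hnorm : α * ‖θopt‖ ^ 2 ≤ (2 * α - 1) * R ^ 2 :=
          mul_le_mul (by linarith) (pow_le_pow_left₀ (norm_nonneg _) hR 2) (sq_nonneg _)
            (by linarith)
        have h1 := mul_le_mul_of_nonneg_right hratio
          (by positivity : (0 : ℝ) ≤ p / 2 * Real.log (M / m))
        have h2 := mul_le_mul_of_nonneg_left hnorm (by positivity : (0 : ℝ) ≤ β * m / 2)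
        linarith

/-- Rényi divergence from a strongly log-concave Gibbs measure to a
centered isotropic Gaussian. -/
theorem renyi_gibbs_to_centered_gaussian
    {p : ℕ} (hp : 1 ≤ p)
    (𝓛 : Eu p → ℝ) (g : Eu p → Eu p) (hgrad : ∀ x, HasGradientAt 𝓛 (g x) x)
    (m M : ℝ) (hm : 0 < m) (hmM : m ≤ M)
    -- `m`-strong convexity: `𝓛 - (m/2)‖·‖²` is convex
    (hsc : ConvexOn ℝ Set.univ (fun x => 𝓛 x - m / 2 * ‖x‖ ^ 2))
    -- `M`-smoothness: the gradient is `M`-Lipschitz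
    (hsm : LipschitzWith M.toNNReal g)
    (θopt : Eu p) (hopt : ∀ x, 𝓛 θopt ≤ 𝓛 x)
    (R : ℝ) (hR : ‖θopt‖ ≤ R)
    (β : ℝ) (hβ : 0 < β)
    (α : ℝ) (hα : 2 ≤ α) :
    renyiDiv α
        (fun θ => Real.exp (-β * 𝓛 θ) / (∫ x, Real.exp (-β * 𝓛 x)))
        (gaussDensity p (β * m) 0) ≤
      (3 * p / 2) * Real.log (M / m) + β * m * (2 * α - 1) * R ^ 2 / 2 :=
  renyi_gibbs_to_centered_gaussian_general 𝓛 g hgrad m M hm hmM hsc hsm θopt hopt R hR β hβ α hα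

end
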